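/- (Theorem 2, part 1.) If Problem (SLQ) is open-loop solvable at the initial state x₀ = 0, then the homogeneous cost satisfies J⁰(0,u) ≥ 0 for every admissible control u. -/

import Mathlib

open MeasureTheory ProbabilityTheory Matrix Finset Filter Topology

namespace SLQ

/-- Data of the discrete-time stochastic LQ problem. -/
structure Setup (Ω : Type) [MeasurableSpace Ω] (n m N : ℕ) where
  w : ℕ → Ω → ℝ
  A : ℕ → Matrix (Fin n) (Fin n) ℝ
  B : ℕ → Matrix (Fin n) (Fin m) ℝ
  C : ℕ → Matrix (Fin n) (Fin n) ℝ
  D : ℕ → Matrix (Fin n) (Fin m) ℝ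
  Q : ℕ → Matrix (Fin n) (Fin n) ℝ
  S : ℕ → Matrix (Fin m) (Fin n) ℝ
  R : ℕ → Matrix (Fin m) (Fin m) ℝ
  H : Matrix (Fin n) (Fin n) ℝ
  b : ℕ → Ω → Fin n → ℝ
  sig : ℕ → Ω → Fin n → ℝ
  q : ℕ → Ω → Fin n → ℝ
  rho : ℕ → Ω → Fin m → ℝ
  g : Ω → Fin n → ℝ

variable {Ω : Type} [MeasurableSpace Ω] {n m N : ℕ}

/-- `Filt 𝒮 t` is the σ-algebra `𝒻_{t-1} = σ(w_0, …, w_{t-1})`; in particular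
`Filt 𝒮 0` is the trivial σ-algebra `𝒻_{-1}`. -/
def Filt (𝒮 : Setup Ω n m N) (t : ℕ) : MeasurableSpace Ω :=
  ⨆ i ∈ Finset.range t, MeasurableSpace.comap (𝒮.w i) inferInstance

/-- Standing hypotheses on the data: the noises are measurable, independent, centred with
unit variance; the random coefficients are adapted and square integrable; the weighting
matrices are symmetric. -/
def Valid (𝒮 : Setup Ω n m N) (μ : Measure Ω) : Prop :=
  (∀ t, t < N → Measurable (𝒮.w t)) ∧
  iIndepFun (m := fun _ : Fin N => (inferInstance : MeasurableSpace ℝ)) (fun i : Fin N => 𝒮.w i) μ ∧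
  (∀ t, t < N → ∫ ω, 𝒮.w t ω ∂μ = 0) ∧
  (∀ t, t < N → ∫ ω, (𝒮.w t ω) ^ 2 ∂μ = 1) ∧
  (∀ t, t < N → Measurable[Filt 𝒮 t] (𝒮.b t) ∧ MemLp (𝒮.b t) 2 μ) ∧
  (∀ t, t < N → Measurable[Filt 𝒮 t] (𝒮.sig t) ∧ MemLp (𝒮.sig t) 2 μ) ∧
  (∀ t, t < N → Measurable[Filt 𝒮 t] (𝒮.q t) ∧ MemLp (𝒮.q t) 2 μ) ∧
  (∀ t, t < N → Measurable[Filt 𝒮 t] (𝒮.rho t) ∧ MemLp (𝒮.rho t) 2 μ) ∧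
  (Measurable[Filt 𝒮 N] 𝒮.g ∧ MemLp 𝒮.g 2 μ) ∧
  (∀ t, t < N → (𝒮.Q t).IsSymm ∧ (𝒮.R t).IsSymm) ∧ 𝒮.H.IsSymm

/-- Admissible (open-loop) controls: square integrable and `𝒻_{t-1}`-adapted. -/
def Admissible (𝒮 : Setup Ω n m N) (μ : Measure Ω) (u : ℕ → Ω → Fin m → ℝ) : Prop :=
  ∀ t, t < N → Measurable[Filt 𝒮 t] (u t) ∧ MemLp (u t) 2 μ

/-- The state trajectory `x_0 = x₀`, `x_{t+1} = A_t x_t + B_t u_t + b_t + (C_t x_t + D_t u_t + σ_t) w_t`. -/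
def traj (𝒮 : Setup Ω n m N) (x₀ : Fin n → ℝ) (u : ℕ → Ω → Fin m → ℝ) : ℕ → Ω → Fin n → ℝ
  | 0 => fun _ => x₀
  | t + 1 => fun ω =>
      (𝒮.A t).mulVec (traj 𝒮 x₀ u t ω) + (𝒮.B t).mulVec (u t ω) + 𝒮.b t ω
        + 𝒮.w t ω • ((𝒮.C t).mulVec (traj 𝒮 x₀ u t ω) + (𝒮.D t).mulVec (u t ω) + 𝒮.sig t ω)

/-- The cost functional `J(x₀, u)`. -/
noncomputable def cost (𝒮 : Setup Ω n m N) (μ : Measure Ω) (x₀ : Fin n → ℝ)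
    (u : ℕ → Ω → Fin m → ℝ) : ℝ :=
  ∫ ω, ((∑ t ∈ Finset.range N,
      (traj 𝒮 x₀ u t ω ⬝ᵥ (𝒮.Q t).mulVec (traj 𝒮 x₀ u t ω)
        + 2 * (u t ω ⬝ᵥ (𝒮.S t).mulVec (traj 𝒮 x₀ u t ω))
        + u t ω ⬝ᵥ (𝒮.R t).mulVec (u t ω)
        + 2 * (traj 𝒮 x₀ u t ω ⬝ᵥ 𝒮.q t ω)
        + 2 * (u t ω ⬝ᵥ 𝒮.rho t ω)))
    + traj 𝒮 x₀ u N ω ⬝ᵥ 𝒮.H.mulVec (traj 𝒮 x₀ u N ω)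
    + 2 * (traj 𝒮 x₀ u N ω ⬝ᵥ 𝒮.g ω)) ∂μ

/-- `u` is an open-loop optimal control at the initial state `x₀`. -/
def OpenLoopOptimal (𝒮 : Setup Ω n m N) (μ : Measure Ω) (x₀ : Fin n → ℝ)
    (u : ℕ → Ω → Fin m → ℝ) : Prop :=
  Admissible 𝒮 μ u ∧ ∀ u', Admissible 𝒮 μ u' → cost 𝒮 μ x₀ u ≤ cost 𝒮 μ x₀ u'

/-- The homogeneous problem: all the random coefficients `b, σ, q, ρ, g` are set to zero. -/
def homog (𝒮 : Setup Ω n m N) : Setup Ω n m N :=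
  { 𝒮 with b := fun _ _ => 0, sig := fun _ _ => 0, q := fun _ _ => 0,
           rho := fun _ _ => 0, g := fun _ => 0 }

/-- The closed-loop state under a feedback pair `(K, v)`. -/
def cltraj (𝒮 : Setup Ω n m N) (K : ℕ → Matrix (Fin m) (Fin n) ℝ)
    (v : ℕ → Ω → Fin m → ℝ) (x₀ : Fin n → ℝ) : ℕ → Ω → Fin n → ℝ
  | 0 => fun _ => x₀
  | t + 1 => fun ω =>
      (𝒮.A t + 𝒮.B t * K t).mulVec (cltraj 𝒮 K v x₀ t ω) + (𝒮.B t).mulVec (v t ω) + 𝒮.b t ω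
        + 𝒮.w t ω • ((𝒮.C t + 𝒮.D t * K t).mulVec (cltraj 𝒮 K v x₀ t ω)
            + (𝒮.D t).mulVec (v t ω) + 𝒮.sig t ω)

/-- The outcome control `u_t = K_t x_t + v_t` of a feedback pair `(K, v)` at `x₀`. -/
def outcome (𝒮 : Setup Ω n m N) (K : ℕ → Matrix (Fin m) (Fin n) ℝ)
    (v : ℕ → Ω → Fin m → ℝ) (x₀ : Fin n → ℝ) : ℕ → Ω → Fin m → ℝ :=
  fun t ω => (K t).mulVec (cltraj 𝒮 K v x₀ t ω) + v t ω

/-- A closed-loop strategy: deterministic gains `K_t` and adapted square-integrable `v_t`. -/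
def ClosedLoopStrategy (𝒮 : Setup Ω n m N) (μ : Measure Ω)
    (_K : ℕ → Matrix (Fin m) (Fin n) ℝ) (v : ℕ → Ω → Fin m → ℝ) : Prop :=
  ∀ t, t < N → Measurable[Filt 𝒮 t] (v t) ∧ MemLp (v t) 2 μ

/-- `(K, v)` is a closed-loop optimal strategy. -/
def ClosedLoopOptimal (𝒮 : Setup Ω n m N) (μ : Measure Ω)
    (K : ℕ → Matrix (Fin m) (Fin n) ℝ) (v : ℕ → Ω → Fin m → ℝ) : Prop :=
  ClosedLoopStrategy 𝒮 μ K v ∧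
  ∀ x₀ u, Admissible 𝒮 μ u → cost 𝒮 μ x₀ (outcome 𝒮 K v x₀) ≤ cost 𝒮 μ x₀ u

/-- `R̂_t = R_t + B_tᵀ P_{t+1} B_t + D_tᵀ P_{t+1} D_t`. -/
def Rhat (𝒮 : Setup Ω n m N) (P : ℕ → Matrix (Fin n) (Fin n) ℝ) (t : ℕ) :
    Matrix (Fin m) (Fin m) ℝ :=
  𝒮.R t + (𝒮.B t)ᵀ * P (t + 1) * 𝒮.B t + (𝒮.D t)ᵀ * P (t + 1) * 𝒮.D t

/-!
The state is affine in the control: `x^{u' + u} = x^{u'} + x⁰^u`, where `x⁰^u` is the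
homogeneous state started at `0`. The cost is therefore quadratic in the control, and its second
difference is the homogeneous cost: `J(u' + u) + J(u' - u) = 2 J(u') + 2 J⁰(0, u)`. At an optimal
`u'` the left side is at least `2 J(u')`.

All these costs are genuine (finite) integrals because every `x_t` is square integrable: `w_t` is
independent of `𝒻_{t-1}` and has unit second moment, so `w_t • c` is square integrable for any
square-integrable `𝒻_{t-1}`-measurable `c`.
-/

section Filtration

variable (𝒮 : Setup Ω n m N)

lemma filt_mono : Monotone (Filt 𝒮) := fun _ _ hst =>
  biSup_mono fun _ hi => Finset.mem_range.2 ((Finset.mem_range.1 hi).trans_le hst)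

lemma measurable_w_filt_succ (t : ℕ) : Measurable[Filt 𝒮 (t + 1)] (𝒮.w t) :=
  Measurable.of_comap_le <| le_iSup₂ (f := fun i (_ : i ∈ Finset.range (t + 1)) =>
    MeasurableSpace.comap (𝒮.w i) inferInstance) t (Finset.self_mem_range_succ t)

lemma indep_filt_w {μ : Measure Ω} (hw : ∀ t, t < N → Measurable (𝒮.w t))
    (hindep : iIndepFun (m := fun _ : Fin N => (inferInstance : MeasurableSpace ℝ))
      (fun i : Fin N => 𝒮.w i) μ) {t : ℕ} (ht : t < N) :
    Indep (Filt 𝒮 t) (MeasurableSpace.comap (𝒮.w t) inferInstance) μ := by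
  let σw : Fin N → MeasurableSpace Ω := fun i => MeasurableSpace.comap (𝒮.w i) inferInstance
  have h := indep_biSup_compl (fun i : Fin N => (hw i i.isLt).comap_le) hindep
    {i : Fin N | (i : ℕ) < t}
  refine indep_of_indep_of_le_right (indep_of_indep_of_le_left h ?_) ?_
  · refine iSup₂_le fun i hi => ?_
    have hi : i < t := Finset.mem_range.1 hi
    exact le_iSup₂ (f := fun (j : Fin N) (_ : j ∈ {j : Fin N | (j : ℕ) < t}) => σw j)
      ⟨i, hi.trans ht⟩ hi
  · exact le_iSup₂ (f := fun (j : Fin N) (_ : j ∈ {j : Fin N | (j : ℕ) < t}ᶜ) => σw j)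
      ⟨t, ht⟩ (lt_irrefl t)

end Filtration

section SquareIntegrable

variable {μ : Measure Ω}

lemma memLp_two_smul_of_indepFun {E : Type*} [NormedAddCommGroup E] [NormedSpace ℝ E]
    [MeasurableSpace E] [OpensMeasurableSpace E] {X : Ω → ℝ} {Y : Ω → E}
    (hXY : IndepFun X Y μ) (hX : MemLp X 2 μ) (hY : MemLp Y 2 μ) :
    MemLp (fun ω => X ω • Y ω) 2 μ := by
  refine (memLp_two_iff_integrable_sq_norm (hX.1.smul hY.1)).2 ?_
  have hsq : IndepFun (fun ω => X ω ^ 2) (fun ω => ‖Y ω‖ ^ 2) μ :=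
    hXY.comp (measurable_id.pow_const 2) (measurable_norm.pow_const 2)
  have := hsq.integrable_mul ((memLp_two_iff_integrable_sq hX.1).1 hX)
    ((memLp_two_iff_integrable_sq_norm hY.1).1 hY)
  convert this using 2 with ω
  simp [norm_smul, mul_pow]

lemma memLp_mulVec {p : ENNReal} {k l : ℕ} (M : Matrix (Fin k) (Fin l) ℝ) {f : Ω → Fin l → ℝ}
    (hf : MemLp f p μ) : MemLp (fun ω => M *ᵥ f ω) p μ :=
  (LinearMap.toContinuousLinearMap M.mulVecLin).comp_memLp' hf

lemma integrable_dotProduct {k : ℕ} {f g : Ω → Fin k → ℝ} (hf : MemLp f 2 μ)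
    (hg : MemLp g 2 μ) : Integrable (fun ω => f ω ⬝ᵥ g ω) μ :=
  integrable_finsetSum _ fun i _ => (hf.eval i).integrable_mul (hg.eval i)

lemma measurable_mulVec {α : Type*} {m' : MeasurableSpace α} {k l : ℕ}
    (M : Matrix (Fin k) (Fin l) ℝ) {f : α → Fin l → ℝ} (hf : Measurable[m'] f) :
    Measurable[m'] fun a => M *ᵥ f a :=
  (continuous_const.matrix_mulVec continuous_id).measurable.comp hf

end SquareIntegrable

section Trajectory

variable (𝒮 : Setup Ω n m N) {μ : Measure Ω}

lemma memLp_two_w (hvalid : Valid 𝒮 μ) {t : ℕ} (ht : t < N) : MemLp (𝒮.w t) 2 μ :=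
  (memLp_two_iff_integrable_sq (hvalid.1 t ht).aestronglyMeasurable).2 <|
    .of_integral_ne_zero (by rw [hvalid.2.2.2.1 t ht]; exact one_ne_zero)

lemma adapted_memLp_traj [IsFiniteMeasure μ] (hvalid : Valid 𝒮 μ) {u : ℕ → Ω → Fin m → ℝ}
    (hu : Admissible 𝒮 μ u) (x₀ : Fin n → ℝ) :
    ∀ t, t ≤ N → Measurable[Filt 𝒮 t] (traj 𝒮 x₀ u t) ∧ MemLp (traj 𝒮 x₀ u t) 2 μ
  | 0, _ => ⟨measurable_const, memLp_const x₀⟩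
  | t + 1, ht => by
    obtain ⟨hxm, hxp⟩ := adapted_memLp_traj hvalid hu x₀ t (Nat.le_of_succ_le ht)
    obtain ⟨hum, hup⟩ := hu t ht
    obtain ⟨hbm, hbp⟩ := hvalid.2.2.2.2.1 t ht
    obtain ⟨hσm, hσp⟩ := hvalid.2.2.2.2.2.1 t ht
    set c : Ω → Fin n → ℝ := fun ω => 𝒮.C t *ᵥ traj 𝒮 x₀ u t ω + 𝒮.D t *ᵥ u t ω + 𝒮.sig t ω
    have hcm : Measurable[Filt 𝒮 t] c :=
      ((measurable_mulVec _ hxm).add (measurable_mulVec _ hum)).add hσm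
    have hcw : IndepFun (𝒮.w t) c μ :=
      (indep_of_indep_of_le_left (indep_filt_w 𝒮 hvalid.1 hvalid.2.1 ht) hcm.comap_le).symm
    have hmono := filt_mono 𝒮 (Nat.le_succ t)
    constructor
    · exact (((measurable_mulVec _ (hxm.mono hmono le_rfl)).add
        (measurable_mulVec _ (hum.mono hmono le_rfl))).add (hbm.mono hmono le_rfl)).add
        ((measurable_w_filt_succ 𝒮 t).smul (hcm.mono hmono le_rfl))
    · exact (((memLp_mulVec _ hxp).add (memLp_mulVec _ hup)).add hbp).add
        (memLp_two_smul_of_indepFun hcw (memLp_two_w 𝒮 hvalid ht)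
          (((memLp_mulVec _ hxp).add (memLp_mulVec _ hup)).add hσp))

end Trajectory

section Cost

variable (𝒮 : Setup Ω n m N) {μ : Measure Ω}

lemma valid_homog [IsFiniteMeasure μ] (hvalid : Valid 𝒮 μ) : Valid (homog 𝒮) μ := by
  obtain ⟨hw, hindep, hmean, hvar, -, -, -, -, -, hQR, hH⟩ := hvalid
  have hzero {k : ℕ} (t : ℕ) : Measurable[Filt (homog 𝒮) t] (fun _ : Ω => (0 : Fin k → ℝ)) ∧
      MemLp (fun _ : Ω => (0 : Fin k → ℝ)) 2 μ := ⟨measurable_const, memLp_const 0⟩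
  exact ⟨hw, hindep, hmean, hvar, fun t _ => hzero t, fun t _ => hzero t, fun t _ => hzero t,
    fun t _ => hzero t, hzero N, hQR, hH⟩

lemma admissible_add {u' u : ℕ → Ω → Fin m → ℝ} (hu' : Admissible 𝒮 μ u')
    (hu : Admissible 𝒮 μ u) : Admissible 𝒮 μ (u' + u) :=
  fun t ht => ⟨(hu' t ht).1.add (hu t ht).1, (hu' t ht).2.add (hu t ht).2⟩

lemma admissible_sub {u' u : ℕ → Ω → Fin m → ℝ} (hu' : Admissible 𝒮 μ u')
    (hu : Admissible 𝒮 μ u) : Admissible 𝒮 μ (u' - u) :=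
  fun t ht => ⟨(hu' t ht).1.sub (hu t ht).1, (hu' t ht).2.sub (hu t ht).2⟩

lemma traj_add (x₀ : Fin n → ℝ) (u' u : ℕ → Ω → Fin m → ℝ) :
    ∀ t, traj 𝒮 x₀ (u' + u) t = traj 𝒮 x₀ u' t + traj (homog 𝒮) 0 u t
  | 0 => by ext; simp [traj]
  | t + 1 => by
    ext ω : 1
    simp only [traj, traj_add x₀ u' u t, homog, Pi.add_apply, mulVec_add, smul_add, add_zero]
    abel

lemma traj_sub (x₀ : Fin n → ℝ) (u' u : ℕ → Ω → Fin m → ℝ) (t : ℕ) :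
    traj 𝒮 x₀ (u' - u) t = traj 𝒮 x₀ u' t - traj (homog 𝒮) 0 u t := by
  rw [eq_sub_iff_add_eq, ← traj_add, sub_add_cancel]

def stageCost {k l : ℕ} (Q : Matrix (Fin k) (Fin k) ℝ) (S : Matrix (Fin l) (Fin k) ℝ)
    (R : Matrix (Fin l) (Fin l) ℝ) (q : Fin k → ℝ) (ρ : Fin l → ℝ) (x : Fin k → ℝ)
    (a : Fin l → ℝ) : ℝ :=
  x ⬝ᵥ Q *ᵥ x + 2 * (a ⬝ᵥ S *ᵥ x) + a ⬝ᵥ R *ᵥ a + 2 * (x ⬝ᵥ q) + 2 * (a ⬝ᵥ ρ)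

lemma stageCost_add_add_stageCost_sub {k l : ℕ} (Q : Matrix (Fin k) (Fin k) ℝ)
    (S : Matrix (Fin l) (Fin k) ℝ) (R : Matrix (Fin l) (Fin l) ℝ) (q : Fin k → ℝ)
    (ρ : Fin l → ℝ) (x y : Fin k → ℝ) (a b : Fin l → ℝ) :
    stageCost Q S R q ρ (x + y) (a + b) + stageCost Q S R q ρ (x - y) (a - b)
      = 2 * stageCost Q S R q ρ x a + 2 * stageCost Q S R 0 0 y b := by
  simp only [stageCost, mulVec_add, mulVec_sub, add_dotProduct, sub_dotProduct, dotProduct_add,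
    dotProduct_sub, dotProduct_zero]
  ring

lemma integrable_stageCost {k l : ℕ} (Q : Matrix (Fin k) (Fin k) ℝ)
    (S : Matrix (Fin l) (Fin k) ℝ) (R : Matrix (Fin l) (Fin l) ℝ) {q x : Ω → Fin k → ℝ}
    {ρ a : Ω → Fin l → ℝ} (hq : MemLp q 2 μ) (hρ : MemLp ρ 2 μ) (hx : MemLp x 2 μ)
    (ha : MemLp a 2 μ) :
    Integrable (fun ω => stageCost Q S R (q ω) (ρ ω) (x ω) (a ω)) μ :=
  ((((integrable_dotProduct hx (memLp_mulVec Q hx)).add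
    ((integrable_dotProduct ha (memLp_mulVec S hx)).const_mul 2)).add
    (integrable_dotProduct ha (memLp_mulVec R ha))).add
    ((integrable_dotProduct hx hq).const_mul 2)).add ((integrable_dotProduct ha hρ).const_mul 2)

def terminalCost {k : ℕ} (H : Matrix (Fin k) (Fin k) ℝ) (g x : Fin k → ℝ) : ℝ :=
  x ⬝ᵥ H *ᵥ x + 2 * (x ⬝ᵥ g)

lemma terminalCost_add_add_terminalCost_sub {k : ℕ} (H : Matrix (Fin k) (Fin k) ℝ)
    (g x y : Fin k → ℝ) :
    terminalCost H g (x + y) + terminalCost H g (x - y)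
      = 2 * terminalCost H g x + 2 * terminalCost H 0 y := by
  simp only [terminalCost, mulVec_add, mulVec_sub, add_dotProduct, sub_dotProduct,
    dotProduct_add, dotProduct_sub, dotProduct_zero]
  ring

lemma integrable_terminalCost {k : ℕ} (H : Matrix (Fin k) (Fin k) ℝ) {g x : Ω → Fin k → ℝ}
    (hg : MemLp g 2 μ) (hx : MemLp x 2 μ) :
    Integrable (fun ω => terminalCost H (g ω) (x ω)) μ :=
  (integrable_dotProduct hx (memLp_mulVec H hx)).add ((integrable_dotProduct hx hg).const_mul 2)

def costIntegrand (x₀ : Fin n → ℝ) (u : ℕ → Ω → Fin m → ℝ) (ω : Ω) : ℝ :=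
  (∑ t ∈ Finset.range N,
      stageCost (𝒮.Q t) (𝒮.S t) (𝒮.R t) (𝒮.q t ω) (𝒮.rho t ω) (traj 𝒮 x₀ u t ω) (u t ω))
    + terminalCost 𝒮.H (𝒮.g ω) (traj 𝒮 x₀ u N ω)

lemma cost_eq_integral_costIntegrand (x₀ : Fin n → ℝ) (u : ℕ → Ω → Fin m → ℝ) :
    cost 𝒮 μ x₀ u = ∫ ω, costIntegrand 𝒮 x₀ u ω ∂μ := by
  simp only [cost, costIntegrand, stageCost, terminalCost, add_assoc]

lemma integrable_costIntegrand [IsFiniteMeasure μ] (hvalid : Valid 𝒮 μ)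
    {u : ℕ → Ω → Fin m → ℝ} (hu : Admissible 𝒮 μ u) (x₀ : Fin n → ℝ) :
    Integrable (costIntegrand 𝒮 x₀ u) μ := by
  have hx := fun t ht => (adapted_memLp_traj 𝒮 hvalid hu x₀ t ht).2
  refine (integrable_finsetSum _ fun t ht => ?_).add
    (integrable_terminalCost _ hvalid.2.2.2.2.2.2.2.2.1.2 (hx N le_rfl))
  have ht : t < N := Finset.mem_range.1 ht
  exact integrable_stageCost _ _ _ (hvalid.2.2.2.2.2.2.1 t ht).2
    (hvalid.2.2.2.2.2.2.2.1 t ht).2 (hx t ht.le) (hu t ht).2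

lemma costIntegrand_homog (u : ℕ → Ω → Fin m → ℝ) (ω : Ω) :
    costIntegrand (homog 𝒮) 0 u ω
      = (∑ t ∈ Finset.range N,
          stageCost (𝒮.Q t) (𝒮.S t) (𝒮.R t) 0 0 (traj (homog 𝒮) 0 u t ω) (u t ω))
        + terminalCost 𝒮.H 0 (traj (homog 𝒮) 0 u N ω) :=
  rfl

lemma costIntegrand_add_add_costIntegrand_sub (x₀ : Fin n → ℝ) (u' u : ℕ → Ω → Fin m → ℝ)
    (ω : Ω) :
    costIntegrand 𝒮 x₀ (u' + u) ω + costIntegrand 𝒮 x₀ (u' - u) ω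
      = 2 * costIntegrand 𝒮 x₀ u' ω + 2 * costIntegrand (homog 𝒮) 0 u ω := by
  have hstage := Finset.sum_congr (s₁ := Finset.range N) rfl fun t _ =>
    stageCost_add_add_stageCost_sub (𝒮.Q t) (𝒮.S t) (𝒮.R t) (𝒮.q t ω) (𝒮.rho t ω)
      (traj 𝒮 x₀ u' t ω) (traj (homog 𝒮) 0 u t ω) (u' t ω) (u t ω)
  simp only [Finset.sum_add_distrib, ← Finset.mul_sum] at hstage
  rw [costIntegrand_homog]
  simp only [costIntegrand, traj_add, traj_sub, Pi.add_apply, Pi.sub_apply]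
  linear_combination hstage + terminalCost_add_add_terminalCost_sub 𝒮.H (𝒮.g ω)
    (traj 𝒮 x₀ u' N ω) (traj (homog 𝒮) 0 u N ω)

lemma cost_add_add_cost_sub [IsFiniteMeasure μ] (hvalid : Valid 𝒮 μ)
    {u' u : ℕ → Ω → Fin m → ℝ} (hu' : Admissible 𝒮 μ u') (hu : Admissible 𝒮 μ u)
    (x₀ : Fin n → ℝ) :
    cost 𝒮 μ x₀ (u' + u) + cost 𝒮 μ x₀ (u' - u)
      = 2 * cost 𝒮 μ x₀ u' + 2 * cost (homog 𝒮) μ 0 u := by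
  simp only [cost_eq_integral_costIntegrand]
  rw [← integral_add (integrable_costIntegrand 𝒮 hvalid (admissible_add 𝒮 hu' hu) x₀)
      (integrable_costIntegrand 𝒮 hvalid (admissible_sub 𝒮 hu' hu) x₀),
    ← integral_const_mul, ← integral_const_mul,
    ← integral_add ((integrable_costIntegrand 𝒮 hvalid hu' x₀).const_mul 2)
      ((integrable_costIntegrand (homog 𝒮) (valid_homog 𝒮 hvalid) hu 0).const_mul 2)]
  exact integral_congr_ae (ae_of_all _ (costIntegrand_add_add_costIntegrand_sub 𝒮 x₀ u' u))

end Cost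

theorem statement_6_general
    {Ω : Type} [MeasurableSpace Ω] {n m N : ℕ}
    (𝒮 : Setup Ω n m N) (μ : Measure Ω) [IsProbabilityMeasure μ]
    (hvalid : Valid 𝒮 μ)
    (hsolv : ∃ u, OpenLoopOptimal 𝒮 μ (0 : Fin n → ℝ) u) :
    ∀ u, Admissible 𝒮 μ u → 0 ≤ cost (homog 𝒮) μ (0 : Fin n → ℝ) u := by
  intro u hu
  obtain ⟨u₀, hu₀, hopt⟩ := hsolv
  have hplus := hopt _ (admissible_add 𝒮 hu₀ hu)
  have hminus := hopt _ (admissible_sub 𝒮 hu₀ hu)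
  have := cost_add_add_cost_sub 𝒮 hvalid hu₀ hu 0
  linarith

/-- Theorem 2, part 1: open-loop solvability at `x₀ = 0` forces nonnegativity of the
homogeneous cost `J⁰(0, ·)`. -/
theorem statement_6
    {Ω : Type} [MeasurableSpace Ω] {n m N : ℕ} (hN : 1 ≤ N)
    (𝒮 : Setup Ω n m N) (μ : Measure Ω) [IsProbabilityMeasure μ]
    (hvalid : Valid 𝒮 μ)
    (hsolv : ∃ u, OpenLoopOptimal 𝒮 μ (0 : Fin n → ℝ) u) :
    ∀ u, Admissible 𝒮 μ u → 0 ≤ cost (homog 𝒮) μ (0 : Fin n → ℝ) u :=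
  statement_6_general 𝒮 μ hvalid hsolv

end SLQ
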